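/- For every integer k ≥ 1, the image of the generator y in the group G_k with presentation ⟨x, y | x y x⁻¹ = y⁻¹, x² = y^k⟩ has order exactly 2k. -/

import Mathlib

/-- The relations of the generalised quaternion group `Q_{4k}`:
`x y x⁻¹ y` and `x² y^{-k}`, where `x = FreeGroup.of 0` and `y = FreeGroup.of 1`. -/
def quaternionRels (k : ℕ) : Set (FreeGroup (Fin 2)) :=
  {FreeGroup.of 0 * FreeGroup.of 1 * (FreeGroup.of 0)⁻¹ * FreeGroup.of 1,
   FreeGroup.of 0 ^ 2 * FreeGroup.of 1 ^ (-(k : ℤ))}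

/-!
Conjugation by `x` fixes `x² = y^k` and inverts `y`, so `y^k = y^{-k}` and the order of `y`
divides `2k`. Conversely `x ↦ xa 0`, `y ↦ a 1` satisfies the relations in Mathlib's
`QuaternionGroup k`, where `a 1` has order exactly `2k`.
-/

theorem orderOf_dvd_two_mul_of_conj_eq_inv {G : Type*} [Group G] {x y : G} {k : ℕ}
    (hconj : x * y * x⁻¹ = y⁻¹) (hsq : x ^ 2 = y ^ k) : orderOf y ∣ 2 * k := by
  apply orderOf_dvd_of_pow_eq_one
  have hfix : x * y ^ k * x⁻¹ = y ^ k := by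
    rw [← hsq, ← pow_succ', pow_succ, mul_inv_cancel_right]
  rw [two_mul, pow_add, mul_eq_one_iff_eq_inv]
  calc y ^ k = x * y ^ k * x⁻¹ := hfix.symm
    _ = (y ^ k)⁻¹ := by rw [← conj_pow, hconj, inv_pow]

theorem lift_quaternionRels_eq_one_iff {G : Type*} [Group G] (k : ℕ) (f : Fin 2 → G) :
    (∀ r ∈ quaternionRels k, FreeGroup.lift f r = 1) ↔
      f 0 * f 1 * (f 0)⁻¹ = (f 1)⁻¹ ∧ f 0 ^ 2 = f 1 ^ k := by
  simp only [quaternionRels, Set.mem_insert_iff, Set.mem_singleton_iff, forall_eq_or_imp,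
    forall_eq, map_mul, map_inv, map_pow, FreeGroup.lift_apply_of, zpow_neg,
    zpow_natCast, ← eq_inv_iff_mul_eq_one, inv_inv]

theorem PresentedGroup.lift_of_eq_one {α : Type*} {rels : Set (FreeGroup α)} {r : FreeGroup α}
    (hr : r ∈ rels) : FreeGroup.lift (PresentedGroup.of (rels := rels)) r = 1 := by
  have hmk : FreeGroup.lift (PresentedGroup.of (rels := rels)) = PresentedGroup.mk rels :=
    FreeGroup.ext_hom _ _ fun _ => rfl
  rw [hmk]
  exact PresentedGroup.one_of_mem hr

open QuaternionGroup in
theorem QuaternionGroup.xa_zero_a_one_rels (k : ℕ) :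
    xa 0 * a 1 * (xa 0)⁻¹ = (a 1 : QuaternionGroup k)⁻¹ ∧
      (xa 0 : QuaternionGroup k) ^ 2 = a 1 ^ k := by
  refine ⟨?_, by rw [xa_sq, a_one_pow]⟩
  rw [mul_inv_eq_iff_eq_mul]
  show xa 0 * a 1 = a (-1) * xa 0
  simp

open QuaternionGroup in
def PresentedGroup.toQuaternionGroup (k : ℕ) :
    PresentedGroup (quaternionRels k) →* QuaternionGroup k :=
  PresentedGroup.toGroup
    ((lift_quaternionRels_eq_one_iff k ![xa 0, a 1]).2 (xa_zero_a_one_rels k))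

theorem presented_quaternion_orderOf_y_general (k : ℕ) :
    orderOf (PresentedGroup.of (rels := quaternionRels k) 1) = 2 * k := by
  obtain ⟨hconj, hsq⟩ := (lift_quaternionRels_eq_one_iff k PresentedGroup.of).1
    fun _ => PresentedGroup.lift_of_eq_one
  refine Nat.dvd_antisymm (orderOf_dvd_two_mul_of_conj_eq_inv hconj hsq) ?_
  have himage := orderOf_map_dvd (PresentedGroup.toQuaternionGroup k) (PresentedGroup.of 1)
  rwa [PresentedGroup.toQuaternionGroup, PresentedGroup.toGroup.of, Matrix.cons_val_one,
    Matrix.cons_val_zero, QuaternionGroup.orderOf_a_one] at himage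

theorem presented_quaternion_orderOf_y (k : ℕ) (hk : 1 ≤ k) :
    orderOf (PresentedGroup.of (rels := quaternionRels k) 1) = 2 * k :=
  presented_quaternion_orderOf_y_general k
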